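/- Under the same hypotheses (F ∈ H ⊗_R H satisfies the cocycle and counit identities), the map α_F : (R, *_F) → H, α_F(a) = Σᵢ α(xᵢ(a))yᵢ, is an algebra homomorphism, the map β_F : (R, *_F) → H, β_F(a) = Σᵢ β(yᵢ(a))xᵢ, is an algebra anti-homomorphism, and their images commute: α_F(a)β_F(b) = β_F(b)α_F(a) for all a, b ∈ R. -/
import Mathlib


open TensorProduct

noncomputable section

variable (k : Type) {H R : Type} [CommRing k] [Ring H] [Algebra k H] [Ring R] [Algebra k R]

/-- The relation submodule defining the `(R,R)`-bimodule tensor product `H ⊗_R H`,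
where the right `R`-action on `H` is `h · a = bf a * h` and the left action is
`a · h = af a * h`.  Generators: `(bf a * x) ⊗ y - x ⊗ (af a * y)`. -/
def relQ (af bf : R → H) : Submodule k (H ⊗[k] H) :=
  Submodule.span k {z | ∃ (a : R) (x y : H), z = (bf a * x) ⊗ₜ[k] y - x ⊗ₜ[k] (af a * y)}

/-- `H ⊗_R H` as a quotient of `H ⊗[k] H`. -/
abbrev HtQ (af bf : R → H) : Type _ := (H ⊗[k] H) ⧸ relQ k af bf

/-- The canonical projection `H ⊗[k] H → H ⊗_R H`. -/
def prQ (af bf : R → H) : H ⊗[k] H →ₗ[k] HtQ k af bf := (relQ k af bf).mkQ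

lemma relQ_mul_right (af bf : R → H) {w : H ⊗[k] H} (hw : w ∈ relQ k af bf)
    (u : H ⊗[k] H) : w * u ∈ relQ k af bf := by
  induction hw using Submodule.span_induction with
  | mem z hz =>
      obtain ⟨a, x, y, rfl⟩ := hz
      induction u using TensorProduct.induction_on with
      | zero => simpa using (relQ k af bf).zero_mem
      | tmul p q =>
          rw [sub_mul, Algebra.TensorProduct.tmul_mul_tmul,
            Algebra.TensorProduct.tmul_mul_tmul]
          exact Submodule.subset_span ⟨a, x * p, y * q, by rw [mul_assoc, mul_assoc]⟩
      | add u v hu hv => rw [mul_add]; exact add_mem hu hv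
  | zero => simpa using (relQ k af bf).zero_mem
  | add u v _ _ hu hv => rw [add_mul]; exact add_mem hu hv
  | smul c u _ hu => rw [smul_mul_assoc]; exact Submodule.smul_mem _ c hu

/-- Right multiplication by `u ∈ H ⊗ H` descends to `H ⊗_R H`. -/
def mulRightQ (af bf : R → H) (u : H ⊗[k] H) : HtQ k af bf →ₗ[k] HtQ k af bf :=
  Submodule.mapQ _ _ (LinearMap.mulRight k u)
    (fun w hw => by simpa using relQ_mul_right k af bf hw u)

lemma mulRightQ_mk (af bf : R → H) (u w : H ⊗[k] H) :
    mulRightQ k af bf u (prQ k af bf w) = prQ k af bf (w * u) := by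
  simp [mulRightQ, prQ, Submodule.mapQ_apply]

/-- `u ↦ (right multiplication by `u` on `H ⊗_R H`)`, as a linear map. -/
def mulRightQL (af bf : R → H) :
    (H ⊗[k] H) →ₗ[k] (HtQ k af bf →ₗ[k] HtQ k af bf) where
  toFun := mulRightQ k af bf
  map_add' u v := by
    apply LinearMap.ext; intro x
    obtain ⟨w, rfl⟩ := (relQ k af bf).mkQ_surjective x
    show mulRightQ k af bf (u + v) (prQ k af bf w)
        = mulRightQ k af bf u (prQ k af bf w) + mulRightQ k af bf v (prQ k af bf w)
    rw [mulRightQ_mk, mulRightQ_mk, mulRightQ_mk, mul_add, map_add]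
  map_smul' c u := by
    apply LinearMap.ext; intro x
    obtain ⟨w, rfl⟩ := (relQ k af bf).mkQ_surjective x
    show mulRightQ k af bf (c • u) (prQ k af bf w) = c • mulRightQ k af bf u (prQ k af bf w)
    rw [mulRightQ_mk, mulRightQ_mk, mul_smul_comm, map_smul]

/-- The map `Ψ : H ⊗ (H ⊗ H) → H ⊗_R H`, `h₁ ⊗ h₂ ⊗ h₃ ↦ Δ(h₁)(h₂ ⊗ h₃)`,
associated to a "coproduct" `D : H → H ⊗_R H`. -/
def PsiQ (af bf : R → H) (D : H →ₗ[k] HtQ k af bf) :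
    H ⊗[k] (H ⊗[k] H) →ₗ[k] HtQ k af bf :=
  TensorProduct.lift ((mulRightQL k af bf).flip ∘ₗ D)

/-- The action of `x ⊗ y ⊗ w ∈ H ⊗ H^op ⊗ H^op` on `H ⊗ H ⊗ H`. -/
def Lact (x y w : H) : H ⊗[k] (H ⊗[k] H) →ₗ[k] H ⊗[k] (H ⊗[k] H) :=
  TensorProduct.map (LinearMap.mulLeft k x)
    (TensorProduct.map (LinearMap.mulRight k y) (LinearMap.mulRight k w))

/-- The target map `β`, as a `k`-linear map `R →ₗ H`. -/
def unopL (β : R →ₐ[k] Hᵐᵒᵖ) : R →ₗ[k] H :=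
  (MulOpposite.opLinearEquiv k).symm.toLinearMap ∘ₗ β.toLinearMap

/-- `φ_α`-type map: `φ (x ⊗ y) a = s (μ(x) a) * y`. -/
def phiAL (μ : H →ₐ[k] Module.End k R) (s : R →ₗ[k] H) :
    (H ⊗[k] H) →ₗ[k] R →ₗ[k] H :=
  TensorProduct.lift (LinearMap.mk₂ k
    (fun x y => LinearMap.mulRight k y ∘ₗ s ∘ₗ (μ x : R →ₗ[k] R))
    (by intro x₁ x₂ y; apply LinearMap.ext; intro a
        simp [map_add, add_mul])
    (by intro c x y; apply LinearMap.ext; intro a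
        simp [map_smul, smul_mul_assoc])
    (by intro x y₁ y₂; apply LinearMap.ext; intro a
        simp [mul_add])
    (by intro c x y; apply LinearMap.ext; intro a
        simp [mul_smul_comm]))

/-- `φ_β`-type map: `φ (x ⊗ y) a = s (μ(y) a) * x`. -/
def phiBL (μ : H →ₐ[k] Module.End k R) (s : R →ₗ[k] H) :
    (H ⊗[k] H) →ₗ[k] R →ₗ[k] H :=
  TensorProduct.lift (LinearMap.mk₂ k
    (fun x y => LinearMap.mulRight k x ∘ₗ s ∘ₗ (μ y : R →ₗ[k] R))
    (by intro x₁ x₂ y; apply LinearMap.ext; intro a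
        simp [mul_add])
    (by intro c x y; apply LinearMap.ext; intro a
        simp [mul_smul_comm])
    (by intro x y₁ y₂; apply LinearMap.ext; intro a
        simp [map_add, add_mul])
    (by intro c x y; apply LinearMap.ext; intro a
        simp [map_smul, smul_mul_assoc]))

/-- Evaluation of an element of `H ⊗ H` on a pair of elements of `R` through the
anchor: `(x ⊗ y)(a, b) = μ(x)(a) * μ(y)(b)`. -/
def ev2 (μ : H →ₐ[k] Module.End k R) :
    (H ⊗[k] H) →ₗ[k] R →ₗ[k] R →ₗ[k] R :=
  TensorProduct.lift (LinearMap.mk₂ k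
    (fun x y => (LinearMap.mul k R).compl₁₂ (μ x : R →ₗ[k] R) (μ y : R →ₗ[k] R))
    (by intro x₁ x₂ y; apply LinearMap.ext; intro a; apply LinearMap.ext; intro b
        simp [map_add, add_mul])
    (by intro c x y; apply LinearMap.ext; intro a; apply LinearMap.ext; intro b
        simp [map_smul, smul_mul_assoc])
    (by intro x y₁ y₂; apply LinearMap.ext; intro a; apply LinearMap.ext; intro b
        simp [map_add, mul_add])
    (by intro c x y; apply LinearMap.ext; intro a; apply LinearMap.ext; intro b
        simp [map_smul, mul_smul_comm]))

/-- `(ε ⊗_R id)`-type counit evaluation: `x ⊗ y ↦ s(ε x) * y`. -/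
def e1 (s : R →ₗ[k] H) (ε : H →ₗ[k] R) : (H ⊗[k] H) →ₗ[k] H :=
  TensorProduct.lift (LinearMap.mk₂ k
    (fun x y => s (ε x) * y)
    (by intro x₁ x₂ y; simp [map_add, add_mul])
    (by intro c x y; simp [map_smul, smul_mul_assoc])
    (by intro x y₁ y₂; simp [mul_add])
    (by intro c x y; simp [mul_smul_comm]))

/-- `(id ⊗_R ε)`-type counit evaluation: `x ⊗ y ↦ s(ε y) * x`. -/
def e2 (s : R →ₗ[k] H) (ε : H →ₗ[k] R) : (H ⊗[k] H) →ₗ[k] H :=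
  TensorProduct.lift (LinearMap.mk₂ k
    (fun x y => s (ε y) * x)
    (by intro x₁ x₂ y; simp [mul_add])
    (by intro c x y; simp [mul_smul_comm])
    (by intro x y₁ y₂; simp [map_add, add_mul])
    (by intro c x y; simp [map_smul, smul_mul_assoc]))

/-- The relation submodule for the triple tensor product `H ⊗_R H ⊗_R H`. -/
def relQ3 (af bf : R → H) : Submodule k ((H ⊗[k] H) ⊗[k] H) :=
  Submodule.span k
    ({w | ∃ (a : R) (x y z : H),
        w = ((bf a * x) ⊗ₜ[k] y) ⊗ₜ[k] z - (x ⊗ₜ[k] (af a * y)) ⊗ₜ[k] z} ∪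
     {w | ∃ (a : R) (x y z : H),
        w = (x ⊗ₜ[k] (bf a * y)) ⊗ₜ[k] z - (x ⊗ₜ[k] y) ⊗ₜ[k] (af a * z)})

/-- `H ⊗_R H ⊗_R H`. -/
abbrev HtQ3 (af bf : R → H) : Type _ := ((H ⊗[k] H) ⊗[k] H) ⧸ relQ3 k af bf

/-- Projection onto `H ⊗_R H ⊗_R H`. -/
def prQ3 (af bf : R → H) : (H ⊗[k] H) ⊗[k] H →ₗ[k] HtQ3 k af bf := (relQ3 k af bf).mkQ

variable {A : Type} [Ring A] [Algebra k A]

/-- Representative-level `(Δ ⊗ id)` map. -/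
def DL (Δ' : H →ₗ[k] H ⊗[k] H) : H ⊗[k] H →ₗ[k] (H ⊗[k] H) ⊗[k] H :=
  TensorProduct.map Δ' LinearMap.id

/-- Representative-level `(id ⊗ Δ)` map (landing in the left-associated triple product). -/
def DR (Δ' : H →ₗ[k] H ⊗[k] H) : H ⊗[k] H →ₗ[k] (H ⊗[k] H) ⊗[k] H :=
  (TensorProduct.assoc k H H H).symm.toLinearMap ∘ₗ TensorProduct.map LinearMap.id Δ'

/-- Reassociation `H ⊗ (H ⊗ H) → (H ⊗ H) ⊗ H`. -/
def aInv : H ⊗[k] (H ⊗[k] H) →ₗ[k] (H ⊗[k] H) ⊗[k] H :=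
  (TensorProduct.assoc k H H H).symm.toLinearMap

/-- The cocycle identity `((Δ ⊗_R id)F)·F¹² = ((id ⊗_R Δ)F)·F²³` in `H ⊗_R H ⊗_R H`,
stated at the level of a representative `F'` and a representative lift `Δ'` of the
coproduct. -/
def IsCocycle (af bf : R → H) (Δ' : H →ₗ[k] H ⊗[k] H) (F' : H ⊗[k] H) : Prop :=
  prQ3 k af bf (DL k Δ' F' * (F' ⊗ₜ[k] (1 : H)))
    = prQ3 k af bf (DR k Δ' F' * aInv k ((1 : H) ⊗ₜ[k] F'))

/-- The counit identities `(ε ⊗_R id)F = 1 = (id ⊗_R ε)F`. -/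
def IsCounital (s t : R →ₗ[k] H) (ε : H →ₗ[k] R) (F' : H ⊗[k] H) : Prop :=
  e1 k s ε F' = 1 ∧ e2 k t ε F' = 1

end

noncomputable section AuxStuff

open TensorProduct

variable {k H R : Type} [CommRing k] [Ring H] [Algebra k H] [Ring R] [Algebra k R]

/-- Constructor for a linear map on the triple tensor product from a trilinear function. -/
def triL (f : H → H → H → H)
    (h1 : ∀ u₁ u₂ v w, f (u₁ + u₂) v w = f u₁ v w + f u₂ v w)
    (h2 : ∀ (c : k) (u v w : H), f (c • u) v w = c • f u v w)
    (h3 : ∀ u v₁ v₂ w, f u (v₁ + v₂) w = f u v₁ w + f u v₂ w)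
    (h4 : ∀ (c : k) (u v w : H), f u (c • v) w = c • f u v w)
    (h5 : ∀ u v w₁ w₂, f u v (w₁ + w₂) = f u v w₁ + f u v w₂)
    (h6 : ∀ (c : k) (u v w : H), f u v (c • w) = c • f u v w) :
    (H ⊗[k] H) ⊗[k] H →ₗ[k] H :=
  TensorProduct.lift (TensorProduct.lift
    { toFun := fun u => LinearMap.mk₂ k (f u) (h3 u) (fun c v w => h4 c u v w) (h5 u)
        (fun c v w => h6 c u v w)
      map_add' := by intro u₁ u₂; ext v w; simpa using h1 u₁ u₂ v w
      map_smul' := by intro c u; ext v w; simpa using h2 c u v w })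

@[simp] lemma triL_tmul (f : H → H → H → H) (h1 h2 h3 h4 h5 h6) (u v w : H) :
    triL (k := k) f h1 h2 h3 h4 h5 h6 ((u ⊗ₜ[k] v) ⊗ₜ[k] w) = f u v w := by
  simp [triL]

/-- `(u⊗v)⊗w ↦ f u * (g v * w)`. -/
def tS1 (f g : H →ₗ[k] H) : (H ⊗[k] H) ⊗[k] H →ₗ[k] H :=
  triL (fun u v w => f u * (g v * w))
    (by intro u₁ u₂ v w; simp [add_mul])
    (by intro c u v w; simp [smul_mul_assoc])
    (by intro u v₁ v₂ w; simp [add_mul, mul_add])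
    (by intro c u v w; simp [smul_mul_assoc, mul_smul_comm])
    (by intro u v w₁ w₂; simp [mul_add])
    (by intro c u v w; simp [mul_smul_comm])

@[simp] lemma tS1_tmul (f g : H →ₗ[k] H) (u v w : H) :
    tS1 f g ((u ⊗ₜ[k] v) ⊗ₜ[k] w) = f u * (g v * w) := by simp [tS1]

/-- `(u⊗v)⊗w ↦ f w * (g v * u)`. -/
def tS2 (f g : H →ₗ[k] H) : (H ⊗[k] H) ⊗[k] H →ₗ[k] H :=
  triL (fun u v w => f w * (g v * u))
    (by intro u₁ u₂ v w; simp [mul_add])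
    (by intro c u v w; simp [mul_smul_comm])
    (by intro u v₁ v₂ w; simp [add_mul, mul_add])
    (by intro c u v w; simp [smul_mul_assoc, mul_smul_comm])
    (by intro u v w₁ w₂; simp [add_mul])
    (by intro c u v w; simp [smul_mul_assoc])

@[simp] lemma tS2_tmul (f g : H →ₗ[k] H) (u v w : H) :
    tS2 f g ((u ⊗ₜ[k] v) ⊗ₜ[k] w) = f w * (g v * u) := by simp [tS2]

/-- `(u⊗v)⊗w ↦ f u * (g w * v)`. -/
def tS3 (f g : H →ₗ[k] H) : (H ⊗[k] H) ⊗[k] H →ₗ[k] H :=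
  triL (fun u v w => f u * (g w * v))
    (by intro u₁ u₂ v w; simp [add_mul])
    (by intro c u v w; simp [smul_mul_assoc])
    (by intro u v₁ v₂ w; simp [mul_add])
    (by intro c u v w; simp [mul_smul_comm])
    (by intro u v w₁ w₂; simp [add_mul, mul_add])
    (by intro c u v w; simp [smul_mul_assoc, mul_smul_comm])

@[simp] lemma tS3_tmul (f g : H →ₗ[k] H) (u v w : H) :
    tS3 f g ((u ⊗ₜ[k] v) ⊗ₜ[k] w) = f u * (g w * v) := by simp [tS3]

/-- `u ↦ s (μ u a)` as a linear map. -/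
def evA (s : R →ₗ[k] H) (μ : H →ₐ[k] Module.End k R) (a : R) : H →ₗ[k] H where
  toFun u := s (μ u a)
  map_add' u v := by simp
  map_smul' c u := by simp

@[simp] lemma evA_apply (s : R →ₗ[k] H) (μ : H →ₐ[k] Module.End k R) (a : R) (u : H) :
    evA s μ a u = s (μ u a) := rfl

@[simp] lemma phiAL_tmul (μ : H →ₐ[k] Module.End k R) (s : R →ₗ[k] H) (x y : H) (c : R) :
    phiAL k μ s (x ⊗ₜ[k] y) c = s (μ x c) * y := by
  simp [phiAL]

@[simp] lemma phiBL_tmul (μ : H →ₐ[k] Module.End k R) (s : R →ₗ[k] H) (x y : H) (c : R) :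
    phiBL k μ s (x ⊗ₜ[k] y) c = s (μ y c) * x := by
  simp [phiBL]

@[simp] lemma ev2_tmul (μ : H →ₐ[k] Module.End k R) (x y : H) (c d : R) :
    ev2 k μ (x ⊗ₜ[k] y) c d = μ x c * μ y d := by
  simp [ev2]

/-- If a linear map on the triple tensor product kills the generating relations,
it is constant on fibers of `prQ3`. -/
lemma S_ker (af bf : R → H) (S : (H ⊗[k] H) ⊗[k] H →ₗ[k] H)
    (h1 : ∀ (a : R) (x y z : H),
      S (((bf a * x) ⊗ₜ[k] y) ⊗ₜ[k] z) = S ((x ⊗ₜ[k] (af a * y)) ⊗ₜ[k] z))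
    (h2 : ∀ (a : R) (x y z : H),
      S ((x ⊗ₜ[k] (bf a * y)) ⊗ₜ[k] z) = S ((x ⊗ₜ[k] y) ⊗ₜ[k] (af a * z)))
    {p q : (H ⊗[k] H) ⊗[k] H} (hpq : prQ3 k af bf p = prQ3 k af bf q) : S p = S q := by
  have hz : ∀ w ∈ relQ3 k af bf, S w = 0 := by
    intro w hw
    induction hw using Submodule.span_induction with
    | mem z hzz =>
        rcases hzz with ⟨a, x, y, z', rfl⟩ | ⟨a, x, y, z', rfl⟩
        · rw [map_sub, h1, sub_self]
        · rw [map_sub, h2, sub_self]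
    | zero => simp
    | add u v _ _ hu hv => rw [map_add, hu, hv, add_zero]
    | smul c u _ hu => rw [map_smul, hu, smul_zero]
  have hmem : p - q ∈ relQ3 k af bf := by
    have h' : (Submodule.Quotient.mk p : HtQ3 k af bf) = Submodule.Quotient.mk q := by
      simpa [prQ3] using hpq
    exact (Submodule.Quotient.eq _).mp h'
  have h0 := hz _ hmem
  rw [map_sub, sub_eq_zero] at h0
  exact h0

end AuxStuff

noncomputable section

open TensorProduct

set_option maxHeartbeats 3200000 in
/-- Proposition 4.2 (ii),(iii).  Under the hypotheses of
Statement 2 (`F = Σᵢ xᵢ ⊗_R yᵢ` satisfies the cocycle and counit identities),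
the map `α_F : (R,*_F) → H`, `α_F(a) = Σᵢ α(xᵢ(a))yᵢ` is an algebra homomorphism,
the map `β_F : (R,*_F) → H`, `β_F(a) = Σᵢ β(yᵢ(a))xᵢ` is an algebra
anti-homomorphism, and their images commute. -/
theorem statement3
    (k H R : Type) [CommRing k] [Ring H] [Algebra k H] [Ring R] [Algebra k R]
    (α : R →ₐ[k] H) (β : R →ₐ[k] Hᵐᵒᵖ)
    (hcomm : ∀ a b : R, α a * (β b).unop = (β b).unop * α a)
    (Δ' : H →ₗ[k] H ⊗[k] H) (ε : H →ₗ[k] R)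
    (μ : H →ₐ[k] Module.End k R)
    (hbl : ∀ (a : R) (h : H) (b : R), μ (α a * h) b = a * μ h b)
    (hbr : ∀ (a : R) (h : H) (b : R), μ ((β a).unop * h) b = μ h b * a)
    (hA : ∀ (x : H) (a : R) (u : H ⊗[k] H),
      prQ k (fun a => α a) (fun a => (β a).unop) u
        = prQ k (fun a => α a) (fun a => (β a).unop) (Δ' x) →
      phiAL k μ α.toLinearMap u a = x * α a)
    (hB : ∀ (x : H) (a : R) (u : H ⊗[k] H),
      prQ k (fun a => α a) (fun a => (β a).unop) u
        = prQ k (fun a => α a) (fun a => (β a).unop) (Δ' x) →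
      phiBL k μ (unopL k β) u a = x * (β a).unop)
    (hε : ∀ x : H, μ x 1 = ε x)
    (F' : H ⊗[k] H)
    (hcoc : IsCocycle k (fun a => α a) (fun a => (β a).unop) Δ' F')
    (hcou : IsCounital k α.toLinearMap (unopL k β) ε F') :
    -- with `α_F a := φ_α(F ⊗ a)`, `β_F a := φ_β(F ⊗ a)`, `a *_F b := F(a,b)`:
    ((∀ a b : R,
        phiAL k μ α.toLinearMap F' (ev2 k μ F' a b)
          = phiAL k μ α.toLinearMap F' a * phiAL k μ α.toLinearMap F' b)
    ∧ (∀ a b : R,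
        phiBL k μ (unopL k β) F' (ev2 k μ F' a b)
          = phiBL k μ (unopL k β) F' b * phiBL k μ (unopL k β) F' a)
    ∧ (∀ a b : R,
        phiAL k μ α.toLinearMap F' a * phiBL k μ (unopL k β) F' b
          = phiBL k μ (unopL k β) F' b * phiAL k μ α.toLinearMap F' a)) := by
  clear hε hcou
  have hα1 : ∀ c d : R, μ (α c) d = c * d := by
    intro c d
    have h := hbl c 1 d
    simpa using h
  have hAd : ∀ (x : H) (c : R), phiAL k μ α.toLinearMap (Δ' x) c = x * α c :=
    fun x c => hA x c (Δ' x) rfl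
  have hBd : ∀ (x : H) (c : R), phiBL k μ (unopL k β) (Δ' x) c = x * (β c).unop :=
    fun x c => hB x c (Δ' x) rfl
  have muphi : ∀ (u : H ⊗[k] H) (c d : R),
      μ (phiAL k μ α.toLinearMap u c) d = ev2 k μ u c d := by
    intro u c d
    induction u using TensorProduct.induction_on with
    | zero => simp
    | tmul s t => simp [hbl, hα1]
    | add u v hu hv => simp [map_add, LinearMap.add_apply, hu, hv]
  have L2 : ∀ (x : H) (c d : R), ev2 k μ (Δ' x) c d = μ x (c * d) := by
    intro x c d
    rw [← muphi, hAd, map_mul]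
    simp [Module.End.mul_apply, hα1]
  have ev2mul : ∀ (u : H ⊗[k] H) (p q : H) (c d : R),
      ev2 k μ (u * (p ⊗ₜ[k] q)) c d = ev2 k μ u (μ p c) (μ q d) := by
    intro u p q c d
    induction u using TensorProduct.induction_on with
    | zero => simp
    | tmul s t =>
        simp [Algebra.TensorProduct.tmul_mul_tmul, map_mul, Module.End.mul_apply]
    | add u v hu hv => simp [add_mul, map_add, LinearMap.add_apply, hu, hv]
  refine ⟨?_, ?_, ?_⟩
  · -- α_F is multiplicative
    intro a b
    set S := tS1 (evA (α.toLinearMap) μ a) (evA (α.toLinearMap) μ b) with hS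
    have hrel : S (DL k Δ' F' * (F' ⊗ₜ[k] (1 : H)))
        = S (DR k Δ' F' * aInv k ((1 : H) ⊗ₜ[k] F')) := by
      refine S_ker _ _ S ?_ ?_ hcoc
      · intro c x y z
        simp only [hS, tS1_tmul, evA_apply, AlgHom.toLinearMap_apply, hbr, hbl]
        simp [map_mul, mul_assoc]
      · intro c x y z
        simp only [hS, tS1_tmul, evA_apply, AlgHom.toLinearMap_apply, hbr, hbl]
        simp [map_mul, mul_assoc]
    -- evaluate the left-hand side
    have hSty : ∀ (v : H ⊗[k] H) (y : H),
        S (v ⊗ₜ[k] y) = α (ev2 k μ v a b) * y := by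
      intro v y
      induction v using TensorProduct.induction_on with
      | zero => simp [hS]
      | tmul s t => simp [hS, map_mul, mul_assoc]
      | add u v hu hv => simp [add_tmul, map_add, hu, hv, add_mul]
    have hev2Δ : ∀ (x : H) (G : H ⊗[k] H),
        ev2 k μ (Δ' x * G) a b = μ x (ev2 k μ G a b) := by
      intro x G
      induction G using TensorProduct.induction_on with
      | zero => simp
      | tmul p q => rw [ev2mul, L2, ev2_tmul]
      | add G₁ G₂ h₁ h₂ => simp [mul_add, map_add, h₁, h₂]
    have lhs_eq : ∀ (F G : H ⊗[k] H),
        S (DL k Δ' F * (G ⊗ₜ[k] (1 : H)))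
          = phiAL k μ α.toLinearMap F (ev2 k μ G a b) := by
      intro F G
      induction F using TensorProduct.induction_on with
      | zero => simp [DL]
      | tmul x y =>
          rw [DL]
          simp only [TensorProduct.map_tmul, LinearMap.id_coe, id_eq,
            Algebra.TensorProduct.tmul_mul_tmul, mul_one]
          rw [hSty, hev2Δ, phiAL_tmul, AlgHom.toLinearMap_apply]
      | add F₁ F₂ h₁ h₂ =>
          simp [map_add, add_mul, LinearMap.add_apply, h₁, h₂]
    -- evaluate the right-hand side
    have hSaInv : ∀ (v : H ⊗[k] H) (x p q : H),
        S (aInv k (x ⊗ₜ[k] v) * (((1 : H) ⊗ₜ[k] p) ⊗ₜ[k] q))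
          = α (μ x a) * (phiAL k μ α.toLinearMap v (μ p b) * q) := by
      intro v x p q
      induction v using TensorProduct.induction_on with
      | zero => simp [hS]
      | tmul s t =>
          simp only [aInv, LinearEquiv.coe_coe, TensorProduct.assoc_symm_tmul,
            Algebra.TensorProduct.tmul_mul_tmul, mul_one, one_mul]
          simp [hS, map_mul, Module.End.mul_apply, mul_assoc]
      | add v₁ v₂ h₁ h₂ =>
          simp [tmul_add, map_add, add_mul, mul_add, LinearMap.add_apply, h₁, h₂]
    have rhs_eq : ∀ (F G : H ⊗[k] H),
        S (DR k Δ' F * aInv k ((1 : H) ⊗ₜ[k] G))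
          = phiAL k μ α.toLinearMap F a * phiAL k μ α.toLinearMap G b := by
      intro F G
      induction F using TensorProduct.induction_on with
      | zero => simp [DR]
      | tmul x y =>
          have hDR : DR k Δ' (x ⊗ₜ[k] y) = aInv k (x ⊗ₜ[k] Δ' y) := by
            simp [DR, aInv]
          rw [hDR]
          induction G using TensorProduct.induction_on with
          | zero => simp
          | tmul p q =>
              have h1 : aInv k ((1 : H) ⊗ₜ[k] (p ⊗ₜ[k] q))
                  = ((1 : H) ⊗ₜ[k] p) ⊗ₜ[k] q := by
                simp [aInv]
              rw [h1, hSaInv, hAd, phiAL_tmul, phiAL_tmul]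
              noncomm_ring
          | add G₁ G₂ h₁ h₂ =>
              simp only [tmul_add, map_add, mul_add, LinearMap.add_apply] at h₁ h₂ ⊢
              rw [h₁, h₂]
      | add F₁ F₂ h₁ h₂ =>
          simp only [map_add, add_mul, LinearMap.add_apply] at h₁ h₂ ⊢
          rw [h₁, h₂]
    have := (lhs_eq F' F').symm.trans (hrel.trans (rhs_eq F' F'))
    exact this
  · -- β_F is anti-multiplicative
    intro a b
    have hunop : ∀ r : R, unopL k β r = (β r).unop := fun r => rfl
    have hBu : ∀ c d : R, (β (c * d)).unop = (β d).unop * (β c).unop := by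
      intro c d; simp [map_mul]
    set S := tS2 (evA (unopL k β) μ b) (evA (unopL k β) μ a) with hS
    have hrel : S (DL k Δ' F' * (F' ⊗ₜ[k] (1 : H)))
        = S (DR k Δ' F' * aInv k ((1 : H) ⊗ₜ[k] F')) := by
      refine S_ker _ _ S ?_ ?_ hcoc
      · intro c x y z
        simp only [hS, tS2_tmul, evA_apply, hunop, hbr, hbl]
        simp [hBu, mul_assoc]
      · intro c x y z
        simp only [hS, tS2_tmul, evA_apply, hunop, hbr, hbl]
        simp [hBu, mul_assoc]
    have hStyB : ∀ (v : H ⊗[k] H) (p q y : H),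
        S ((v * (p ⊗ₜ[k] q)) ⊗ₜ[k] y)
          = (β (μ y b)).unop * (phiBL k μ (unopL k β) v (μ q a) * p) := by
      intro v p q y
      induction v using TensorProduct.induction_on with
      | zero => simp [hS]
      | tmul s t =>
          simp only [Algebra.TensorProduct.tmul_mul_tmul]
          simp [hS, hunop, map_mul, Module.End.mul_apply, mul_assoc]
      | add v₁ v₂ h₁ h₂ =>
          simp only [add_mul, add_tmul, map_add, LinearMap.add_apply] at h₁ h₂ ⊢
          rw [h₁, h₂, mul_add]
    have lhs_eq : ∀ (F G : H ⊗[k] H),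
        S (DL k Δ' F * (G ⊗ₜ[k] (1 : H)))
          = phiBL k μ (unopL k β) F b * phiBL k μ (unopL k β) G a := by
      intro F G
      induction F using TensorProduct.induction_on with
      | zero => simp [DL]
      | tmul x y =>
          rw [DL]
          simp only [TensorProduct.map_tmul, LinearMap.id_coe, id_eq,
            Algebra.TensorProduct.tmul_mul_tmul, mul_one]
          induction G using TensorProduct.induction_on with
          | zero => simp
          | tmul p q =>
              rw [hStyB, hBd, phiBL_tmul, phiBL_tmul, hunop, hunop]
              simp [mul_assoc]
          | add G₁ G₂ h₁ h₂ =>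
              simp only [mul_add, add_tmul, map_add, LinearMap.add_apply] at h₁ h₂ ⊢
              rw [h₁, h₂]
      | add F₁ F₂ h₁ h₂ =>
          simp only [map_add, add_mul, LinearMap.add_apply] at h₁ h₂ ⊢
          rw [h₁, h₂]
    have hSaInvB : ∀ (v : H ⊗[k] H) (x p q : H),
        S (aInv k (x ⊗ₜ[k] v) * (((1 : H) ⊗ₜ[k] p) ⊗ₜ[k] q))
          = (β (ev2 k μ v (μ p a) (μ q b))).unop * x := by
      intro v x p q
      induction v using TensorProduct.induction_on with
      | zero => simp [hS]
      | tmul s t =>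
          simp only [aInv, LinearEquiv.coe_coe, TensorProduct.assoc_symm_tmul,
            Algebra.TensorProduct.tmul_mul_tmul, mul_one, one_mul]
          simp [hS, hunop, map_mul, Module.End.mul_apply, hBu, mul_assoc]
      | add v₁ v₂ h₁ h₂ =>
          simp only [tmul_add, map_add, add_mul, LinearMap.add_apply,
            MulOpposite.unop_add] at h₁ h₂ ⊢
          rw [h₁, h₂]
    have rhs_eq : ∀ (F G : H ⊗[k] H),
        S (DR k Δ' F * aInv k ((1 : H) ⊗ₜ[k] G))
          = phiBL k μ (unopL k β) F (ev2 k μ G a b) := by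
      intro F G
      induction F using TensorProduct.induction_on with
      | zero => simp [DR]
      | tmul x y =>
          have hDR : DR k Δ' (x ⊗ₜ[k] y) = aInv k (x ⊗ₜ[k] Δ' y) := by
            simp [DR, aInv]
          rw [hDR]
          induction G using TensorProduct.induction_on with
          | zero => simp
          | tmul p q =>
              have h1 : aInv k ((1 : H) ⊗ₜ[k] (p ⊗ₜ[k] q))
                  = ((1 : H) ⊗ₜ[k] p) ⊗ₜ[k] q := by
                simp [aInv]
              rw [h1, hSaInvB, L2, phiBL_tmul, hunop, ev2_tmul]
          | add G₁ G₂ h₁ h₂ =>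
              simp only [tmul_add, map_add, mul_add, LinearMap.add_apply] at h₁ h₂ ⊢
              rw [h₁, h₂]
      | add F₁ F₂ h₁ h₂ =>
          simp only [map_add, add_mul, LinearMap.add_apply] at h₁ h₂ ⊢
          rw [h₁, h₂]
    exact (rhs_eq F' F').symm.trans (hrel.symm.trans (lhs_eq F' F'))
  · -- images commute
    intro a b
    have hunop : ∀ r : R, unopL k β r = (β r).unop := fun r => rfl
    have hBu : ∀ c d : R, (β (c * d)).unop = (β d).unop * (β c).unop := by
      intro c d; simp [map_mul]
    have hsw : ∀ (c d : R) (w : H),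
        α c * ((β d).unop * w) = (β d).unop * (α c * w) := by
      intro c d w
      rw [← mul_assoc, hcomm, mul_assoc]
    set S := tS3 (evA (α.toLinearMap) μ a) (evA (unopL k β) μ b) with hS
    have hrel : S (DL k Δ' F' * (F' ⊗ₜ[k] (1 : H)))
        = S (DR k Δ' F' * aInv k ((1 : H) ⊗ₜ[k] F')) := by
      refine S_ker _ _ S ?_ ?_ hcoc
      · intro c x y z
        simp only [hS, tS3_tmul, evA_apply, hunop, AlgHom.toLinearMap_apply, hbr, hbl]
        simp [map_mul, mul_assoc, hsw]
      · intro c x y z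
        simp only [hS, tS3_tmul, evA_apply, hunop, AlgHom.toLinearMap_apply, hbr, hbl]
        simp [hBu, mul_assoc]
    have hStyC : ∀ (v : H ⊗[k] H) (p q y : H),
        S ((v * (p ⊗ₜ[k] q)) ⊗ₜ[k] y)
          = (β (μ y b)).unop * (phiAL k μ α.toLinearMap v (μ p a) * q) := by
      intro v p q y
      induction v using TensorProduct.induction_on with
      | zero => simp [hS]
      | tmul s t =>
          simp only [Algebra.TensorProduct.tmul_mul_tmul]
          simp [hS, hunop, AlgHom.toLinearMap_apply, map_mul, Module.End.mul_apply,
            mul_assoc, hsw]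
      | add v₁ v₂ h₁ h₂ =>
          simp only [add_mul, add_tmul, map_add, LinearMap.add_apply] at h₁ h₂ ⊢
          rw [h₁, h₂, mul_add]
    have lhs_eq : ∀ (F G : H ⊗[k] H),
        S (DL k Δ' F * (G ⊗ₜ[k] (1 : H)))
          = phiBL k μ (unopL k β) F b * phiAL k μ α.toLinearMap G a := by
      intro F G
      induction F using TensorProduct.induction_on with
      | zero => simp [DL]
      | tmul x y =>
          rw [DL]
          simp only [TensorProduct.map_tmul, LinearMap.id_coe, id_eq,
            Algebra.TensorProduct.tmul_mul_tmul, mul_one]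
          induction G using TensorProduct.induction_on with
          | zero => simp
          | tmul p q =>
              rw [hStyC, hAd, phiBL_tmul, phiAL_tmul, hunop, AlgHom.toLinearMap_apply]
              simp [mul_assoc]
          | add G₁ G₂ h₁ h₂ =>
              simp only [mul_add, add_tmul, map_add, LinearMap.add_apply] at h₁ h₂ ⊢
              rw [h₁, h₂]
      | add F₁ F₂ h₁ h₂ =>
          simp only [map_add, add_mul, LinearMap.add_apply] at h₁ h₂ ⊢
          rw [h₁, h₂]
    have hSaInvC : ∀ (v : H ⊗[k] H) (x p q : H),
        S (aInv k (x ⊗ₜ[k] v) * (((1 : H) ⊗ₜ[k] p) ⊗ₜ[k] q))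
          = α (μ x a) * (phiBL k μ (unopL k β) v (μ q b) * p) := by
      intro v x p q
      induction v using TensorProduct.induction_on with
      | zero => simp [hS]
      | tmul s t =>
          simp only [aInv, LinearEquiv.coe_coe, TensorProduct.assoc_symm_tmul,
            Algebra.TensorProduct.tmul_mul_tmul, mul_one, one_mul]
          simp [hS, hunop, AlgHom.toLinearMap_apply, map_mul, Module.End.mul_apply,
            mul_assoc]
      | add v₁ v₂ h₁ h₂ =>
          simp only [tmul_add, map_add, add_mul, LinearMap.add_apply] at h₁ h₂ ⊢
          rw [h₁, h₂, mul_add]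
    have rhs_eq : ∀ (F G : H ⊗[k] H),
        S (DR k Δ' F * aInv k ((1 : H) ⊗ₜ[k] G))
          = phiAL k μ α.toLinearMap F a * phiBL k μ (unopL k β) G b := by
      intro F G
      induction F using TensorProduct.induction_on with
      | zero => simp [DR]
      | tmul x y =>
          have hDR : DR k Δ' (x ⊗ₜ[k] y) = aInv k (x ⊗ₜ[k] Δ' y) := by
            simp [DR, aInv]
          rw [hDR]
          induction G using TensorProduct.induction_on with
          | zero => simp
          | tmul p q =>
              have h1 : aInv k ((1 : H) ⊗ₜ[k] (p ⊗ₜ[k] q))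
                  = ((1 : H) ⊗ₜ[k] p) ⊗ₜ[k] q := by
                simp [aInv]
              rw [h1, hSaInvC, hBd, phiAL_tmul, phiBL_tmul, hunop,
                AlgHom.toLinearMap_apply]
              simp [mul_assoc]
          | add G₁ G₂ h₁ h₂ =>
              simp only [tmul_add, map_add, mul_add, LinearMap.add_apply] at h₁ h₂ ⊢
              rw [h₁, h₂]
      | add F₁ F₂ h₁ h₂ =>
          simp only [map_add, add_mul, LinearMap.add_apply] at h₁ h₂ ⊢
          rw [h₁, h₂]
    exact (rhs_eq F' F').symm.trans (hrel.symm.trans (lhs_eq F' F'))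

end
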